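/- arXiv:1609.03142 — 4 statements merged into one kernel-verified Lean document; each statement's English description precedes it below -/
import Mathlib

section
/- Let m ≤ n be positive integers, let M ∈ ℂ^{m×n} have rank m, and let R be a complex trigonometric polynomial of order 2n−1 with 𝒢_M(R) nonempty. Then R takes real values around the unit circle if and only if 𝒢_M(R) contains a Hermitian matrix. -/
set_option autoImplicit false

open Matrix Complex
open scoped ComplexOrder

noncomputable section

/-- `e^{2πiν}` for a real `ν`. -/
def expc (ν : ℝ) : ℂ := Complex.exp (2 * Real.pi * Complex.I * ν)

/-- The power vector `ψ_n(z) = (1, z, …, z^{n−1})`. -/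
def psi (n : ℕ) (z : ℂ) : Fin n → ℂ := fun k => z ^ (k : ℕ)

/-- `ψ_n(z⁻¹)^T (M^* G M) ψ_n(z)`. -/
def gramEval {m n : ℕ} (M : Matrix (Fin m) (Fin n) ℂ) (G : Matrix (Fin m) (Fin m) ℂ)
    (z : ℂ) : ℂ :=
  dotProduct (psi n z⁻¹) ((Mᴴ * G * M).mulVec (psi n z))

/-- Evaluation of the complex trigonometric polynomial of order `2n−1` with
coefficients `r : ℤ → ℂ`: `R(z) = Σ_{k=−n+1}^{n−1} r_k z^k`. -/
def trigEval (n : ℕ) (r : ℤ → ℂ) (z : ℂ) : ℂ :=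
  ∑ k ∈ Finset.Icc (-(n : ℤ) + 1) ((n : ℤ) - 1), r k * z ^ k

/-- Membership in the compact Gram set `𝒢_M(R)`. -/
def InGram {m n : ℕ} (M : Matrix (Fin m) (Fin n) ℂ) (R : ℂ → ℂ)
    (G : Matrix (Fin m) (Fin m) ℂ) : Prop :=
  ∀ z : ℂ, z ≠ 0 → R z = gramEval M G z

lemma gram_expand {m n : ℕ} (M : Matrix (Fin m) (Fin n) ℂ) (G : Matrix (Fin m) (Fin m) ℂ)
    (z : ℂ) : gramEval M G z
      = ∑ j : Fin n, ∑ k : Fin n, (z⁻¹) ^ (j : ℕ) * ((Mᴴ * G * M) j k * z ^ (k : ℕ)) := by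
  simp [gramEval, dotProduct, Matrix.mulVec, psi, Finset.mul_sum, inv_pow]

lemma gram_conjT {m n : ℕ} (M : Matrix (Fin m) (Fin n) ℂ) (G : Matrix (Fin m) (Fin m) ℂ)
    (z : ℂ) : gramEval M Gᴴ z = starRingEnd ℂ (gramEval M G ((starRingEnd ℂ z)⁻¹)) := by
  have hA : Mᴴ * Gᴴ * M = (Mᴴ * G * M)ᴴ := by
    simp [Matrix.conjTranspose_mul, Matrix.mul_assoc]
  rw [gram_expand, gram_expand, hA]
  simp only [map_sum, _root_.map_mul, map_pow, map_inv₀, Complex.conj_conj, inv_inv,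
    Matrix.conjTranspose_apply]
  rw [Finset.sum_comm]
  apply Finset.sum_congr rfl; intro k _
  apply Finset.sum_congr rfl; intro j _
  ring_nf
  rfl

lemma gram_lin {m n : ℕ} (M : Matrix (Fin m) (Fin n) ℂ) (G H : Matrix (Fin m) (Fin m) ℂ)
    (z : ℂ) : gramEval M ((2⁻¹ : ℂ) • (G + H)) z
      = 2⁻¹ * (gramEval M G z + gramEval M H z) := by
  rw [gram_expand, gram_expand, gram_expand]
  simp only [Matrix.mul_add, Matrix.add_mul, Matrix.mul_smul, Matrix.smul_mul,
    Matrix.add_apply, Matrix.smul_apply, smul_eq_mul, Finset.mul_sum,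
    ← Finset.sum_add_distrib]
  apply Finset.sum_congr rfl; intro j _
  apply Finset.sum_congr rfl; intro k _
  ring

lemma expc_ne (ν : ℝ) : expc ν ≠ 0 := Complex.exp_ne_zero _

lemma expc_star (ν : ℝ) : (starRingEnd ℂ) (expc ν) = (expc ν)⁻¹ := by
  rw [expc, ← Complex.exp_conj, ← Complex.exp_neg]
  congr 1
  simp only [_root_.map_mul, Complex.conj_I, Complex.conj_ofReal, map_ofNat]
  ring

lemma expc_inj {a b : ℝ} (ha : a ∈ Set.Ioo (0:ℝ) 1) (hb : b ∈ Set.Ioo (0:ℝ) 1)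
    (h : expc a = expc b) : a = b := by
  rw [expc, expc, Complex.exp_eq_exp_iff_exists_int] at h
  obtain ⟨k, hk⟩ := h
  have h2 : (2 * Real.pi * Complex.I : ℂ) ≠ 0 := by
    simp [Real.pi_ne_zero, Complex.I_ne_zero]
  have : (a : ℂ) = b + k := by
    have := mul_left_cancel₀ h2 (by linear_combination hk :
      (2 * Real.pi * Complex.I : ℂ) * a = (2 * Real.pi * Complex.I) * (b + k))
    exact this
  have hre : a = b + k := by exact_mod_cast this
  have : |(k : ℝ)| < 1 := by
    rw [abs_lt]
    constructor <;> [nlinarith [ha.1, ha.2, hb.1, hb.2]; nlinarith [ha.1, ha.2, hb.1, hb.2]]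
  have hk0 : (-1 : ℝ) < k ∧ (k : ℝ) < 1 := abs_lt.mp this
  have : k = 0 := by
    have h1 : (-1 : ℤ) < k := by exact_mod_cast hk0.1
    have h2 : k < 1 := by exact_mod_cast hk0.2
    omega
  simp [this] at hre; linarith

lemma key (n : ℕ) (hn : 0 < n) (rc : ℤ → ℂ) (R : ℂ → ℂ)
    (hR : ∀ z, R z = trigEval n rc z)
    (hreal : ∀ ν : ℝ, (R (expc ν)).im = 0) :
    ∀ z : ℂ, z ≠ 0 → starRingEnd ℂ (R ((starRingEnd ℂ z)⁻¹)) = R z := by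
  classical
  set s : Finset ℤ := Finset.Icc (-(n : ℤ) + 1) ((n : ℤ) - 1) with hs
  set c : ℤ → ℂ := fun k => rc k - starRingEnd ℂ (rc (-k)) with hc
  set P : Polynomial ℂ := ∑ k ∈ s, Polynomial.C (c k) * Polynomial.X ^ (k + n - 1).toNat
    with hPdef
  have heval : ∀ w : ℂ, w ≠ 0 →
      P.eval w = w ^ (n - 1) * (R w - starRingEnd ℂ (R ((starRingEnd ℂ w)⁻¹))) := by
    intro w hw
    have h1 : starRingEnd ℂ (R ((starRingEnd ℂ w)⁻¹))
        = ∑ k ∈ s, starRingEnd ℂ (rc (-k)) * w ^ k := by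
      rw [hR, trigEval, map_sum]
      refine Finset.sum_equiv (Equiv.neg ℤ) (fun i => ?_) (fun i hi => ?_)
      · simp only [hs, Finset.mem_Icc, Equiv.neg_apply]; omega
      · simp only [Equiv.neg_apply, neg_neg, _root_.map_mul, map_zpow₀, map_inv₀,
          Complex.conj_conj, _root_.inv_zpow, _root_.zpow_neg]
    have h2 : R w - starRingEnd ℂ (R ((starRingEnd ℂ w)⁻¹)) = ∑ k ∈ s, c k * w ^ k := by
      rw [h1, hR, trigEval, ← Finset.sum_sub_distrib]
      exact Finset.sum_congr rfl fun k _ => by rw [hc]; ring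
    rw [h2, hPdef, Polynomial.eval_finset_sum, Finset.mul_sum]
    refine Finset.sum_congr rfl fun k hk => ?_
    have hk' : 0 ≤ k + (n : ℤ) - 1 := by
      simp only [hs, Finset.mem_Icc] at hk; omega
    simp only [Polynomial.eval_mul, Polynomial.eval_C, Polynomial.eval_pow, Polynomial.eval_X]
    have : w ^ (k + (n : ℤ) - 1).toNat = w ^ (k + (n : ℤ) - 1) := by
      rw [← zpow_natCast, Int.toNat_of_nonneg hk']
    rw [this]
    have hwn : (w : ℂ) ^ (n - 1) = w ^ ((n : ℤ) - 1) := by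
      rw [← zpow_natCast]
      congr 1
      omega
    rw [hwn, show k + (n:ℤ) - 1 = ((n:ℤ) - 1) + k by ring, zpow_add₀ hw]
    ring
  have hroot : ∀ ν : ℝ, P.IsRoot (expc ν) := by
    intro ν
    have hz := expc_ne ν
    have hstar : ((starRingEnd ℂ) (expc ν))⁻¹ = expc ν := by
      rw [expc_star, inv_inv]
    rw [Polynomial.IsRoot, heval _ hz, hstar]
    have : starRingEnd ℂ (R (expc ν)) = R (expc ν) :=
      Complex.conj_eq_iff_im.mpr (hreal ν)
    rw [this]
    ring
  have hP0 : P = 0 := by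
    refine Polynomial.eq_zero_of_infinite_isRoot P ?_
    refine Set.infinite_of_injective_forall_mem
      (f := fun j : ℕ => expc (1 / (j + 2))) ?_ ?_
    · intro a b hab
      simp only at hab
      have hca : (0:ℝ) ≤ (a:ℝ) := Nat.cast_nonneg a
      have hcb : (0:ℝ) ≤ (b:ℝ) := Nat.cast_nonneg b
      have ha : (1 : ℝ) / (a + 2) ∈ Set.Ioo (0:ℝ) 1 := by
        constructor
        · positivity
        · rw [div_lt_one (by positivity)]; linarith
      have hb : (1 : ℝ) / (b + 2) ∈ Set.Ioo (0:ℝ) 1 := by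
        constructor
        · positivity
        · rw [div_lt_one (by positivity)]; linarith
      have := expc_inj ha hb hab
      field_simp at this
      exact_mod_cast (by linarith : (a:ℝ) = b)
    · intro j
      exact hroot _
  intro z hz
  have := heval z hz
  rw [hP0] at this
  simp only [Polynomial.eval_zero] at this
  have hzn : z ^ (n - 1) ≠ 0 := pow_ne_zero _ hz
  have := (mul_eq_zero.mp this.symm).resolve_left hzn
  exact (sub_eq_zero.mp this).symm

/-- for full-rank `M` and a trigonometric polynomial `R` of order `2n−1`
with `𝒢_M(R)` nonempty, `R` takes real values around the unit circle iff `𝒢_M(R)`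
contains a Hermitian matrix. -/
theorem stmt3 {m n : ℕ} (hm : 0 < m) (hn : 0 < n) (hmn : m ≤ n)
    (M : Matrix (Fin m) (Fin n) ℂ) (hrank : M.rank = m)
    (rc : ℤ → ℂ) (R : ℂ → ℂ) (hR : ∀ z : ℂ, R z = trigEval n rc z)
    (hne : ∃ G, InGram M R G) :
    (∀ ν : ℝ, (R (expc ν)).im = 0) ↔
      ∃ G : Matrix (Fin m) (Fin m) ℂ, G.IsHermitian ∧ InGram M R G := by

  constructor
  · intro hreal
    obtain ⟨G₀, hG₀⟩ := hne
    refine ⟨(2⁻¹ : ℂ) • (G₀ + G₀ᴴ), ?_, ?_⟩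
    · show _ = _
      rw [Matrix.conjTranspose_smul, Matrix.conjTranspose_add,
        Matrix.conjTranspose_conjTranspose]
      have h : star (2⁻¹ : ℂ) = 2⁻¹ := by
        simp
      rw [h, add_comm]
    · intro z hz
      have hsz : ((starRingEnd ℂ) z)⁻¹ ≠ 0 := inv_ne_zero (by simpa using hz)
      rw [gram_lin, ← hG₀ z hz, gram_conjT, ← hG₀ _ hsz,
        key n hn rc R hR hreal z hz]
      ring
  · rintro ⟨G, hHerm, hGram⟩ ν
    have hz := expc_ne ν
    have h1 : R (expc ν) = gramEval M G (expc ν) := hGram _ hz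
    have hstar : ((starRingEnd ℂ) (expc ν))⁻¹ = expc ν := by rw [expc_star, inv_inv]
    have h2 : gramEval M G (expc ν) = starRingEnd ℂ (gramEval M G (expc ν)) := by
      conv_lhs => rw [← hHerm]
      rw [gram_conjT, hstar]
    have : starRingEnd ℂ (R (expc ν)) = R (expc ν) := by
      rw [h1, ← h2]
    exact Complex.conj_eq_iff_im.mp this
end
end

section
/- Let I ⊆ {0,…,n−1} have cardinality m ≥ 1, let C_I be a selection matrix for I, let J_+ = {j − i : i, j ∈ I, j ≥ i}, and for each k ∈ {0,…,n−1} let J_k be the support of the matrix C_I Θ_k C_I^*, i.e. the set of row-column index pairs where its entry equals 1. Then: (a) C_I Θ_k C_I^* is the zero matrix for every k ∈ {0,…,n−1} not in J_+; (b) the sets {J_k : k ∈ J_+} are pairwise disjoint; (c) for any two distinct row indices i ≠ j, the pair (i,j) belongs to ⋃_{k∈J_+} J_k if and only if (j,i) does not; (d) (i,i) ∈ ⋃_{k∈J_+} J_k for every row index i; (e) for every Hermitian matrix S ∈ M_m(ℂ), 𝒯_n^*(C_I^* S C_I) = Σ_{k∈J_+} (Σ_{(l,r)∈J_k} S_{l,r})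 e_k, where e_k is the k-th standard basis vector of ℂ^n. -/
set_option autoImplicit false

open Matrix Complex

noncomputable section

/-- The elementary Toeplitz matrix `Θ_k`: entry `(i,j)` equals `1` if `j − i = k`,
and `0` otherwise. -/
def Theta (n k : ℕ) : Matrix (Fin n) (Fin n) ℂ :=
  fun i j => if (j : ℤ) - (i : ℤ) = (k : ℤ) then 1 else 0

/-- The adjoint Toeplitz operator `𝒯_n^*`: `𝒯_n^*(H)_k = Σ_{(i,j) : j − i = k} H_{i,j}`. -/
def Tadj {n : ℕ} (H : Matrix (Fin n) (Fin n) ℂ) : Fin n → ℂ :=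
  fun k => ∑ i : Fin n, ∑ j : Fin n, if (j : ℤ) - (i : ℤ) = (k : ℤ) then H i j else 0

/-- The `k`-th standard basis vector of `ℂ^n`. -/
def ek (n k : ℕ) : Fin n → ℂ := fun i => if (i : ℕ) = k then 1 else 0

/-- for a selection matrix `C_I` of `I ⊆ {0,…,n−1}`, with
`J_+ = {j − i : i, j ∈ I, j ≥ i}` and `J_k` the support of `C_I Θ_k C_I^*`:
(a) `C_I Θ_k C_I^* = 0` for `k ∈ {0,…,n−1}` outside `J_+`;
(b) the `J_k`, `k ∈ J_+`, are pairwise disjoint;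
(c) for distinct `i ≠ j`, `(i,j)` lies in the union of the `J_k` iff `(j,i)` does not;
(d) `(i,i)` lies in the union for every `i`;
(e) for Hermitian `S`, `𝒯_n^*(C_I^* S C_I) = Σ_{k ∈ J_+} (Σ_{(l,r) ∈ J_k} S_{l,r}) e_k`. -/
theorem stmt10 {m n : ℕ} (hm : 0 < m)
    (I : Finset ℕ) (hIn : ∀ x ∈ I, x < n) (hcard : I.card = m)
    (σ : Fin m → ℕ) (hinj : Function.Injective σ)
    (hrange : ∀ x : ℕ, x ∈ I ↔ ∃ i : Fin m, σ i = x)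
    (C : Matrix (Fin m) (Fin n) ℂ)
    (hC : ∀ (i : Fin m) (j : Fin n), C i j = if (j : ℕ) = σ i then 1 else 0)
    (Jplus : Finset ℕ)
    (hJplus : ∀ k : ℕ, k ∈ Jplus ↔ ∃ i ∈ I, ∃ j ∈ I, i ≤ j ∧ j - i = k)
    (Jk : ℕ → Finset (Fin m × Fin m))
    (hJk : ∀ (k : ℕ) (q : Fin m × Fin m), q ∈ Jk k ↔ (C * Theta n k * Cᴴ) q.1 q.2 = 1) :
    (∀ k : ℕ, k < n → k ∉ Jplus → C * Theta n k * Cᴴ = 0) ∧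
    (∀ k ∈ Jplus, ∀ l ∈ Jplus, k ≠ l → Disjoint (Jk k) (Jk l)) ∧
    (∀ i j : Fin m, i ≠ j →
      ((∃ k ∈ Jplus, (i, j) ∈ Jk k) ↔ ¬ ∃ k ∈ Jplus, (j, i) ∈ Jk k)) ∧
    (∀ i : Fin m, ∃ k ∈ Jplus, (i, i) ∈ Jk k) ∧
    (∀ S : Matrix (Fin m) (Fin m) ℂ, S.IsHermitian →
      Tadj (Cᴴ * S * C) = ∑ k ∈ Jplus, (∑ q ∈ Jk k, S q.1 q.2) • ek n k) := by
  classical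
  have hσI : ∀ i : Fin m, σ i ∈ I := fun i => (hrange (σ i)).2 ⟨i, rfl⟩
  have hσn : ∀ i : Fin m, σ i < n := fun i => hIn _ (hσI i)
  set fi : Fin m → Fin n := fun i => ⟨σ i, hσn i⟩ with hfi
  have hCeq : ∀ (i : Fin m) (a : Fin n), C i a = if a = fi i then 1 else 0 := by
    intro i a
    rw [hC]
    simp [Fin.ext_iff, hfi]
  -- the key entry formula for C * Θ_k * Cᴴ
  have key : ∀ (k : ℕ) (i j : Fin m),
      (C * Theta n k * Cᴴ) i j = if (σ j : ℤ) - (σ i : ℤ) = (k : ℤ) then 1 else 0 := by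
    intro k i j
    have h1 : (C * Theta n k * Cᴴ) i j
        = ∑ b : Fin n, ∑ a : Fin n, C i a * Theta n k a b * star (C j b) := by
      simp [Matrix.mul_apply, conjTranspose_apply, Finset.sum_mul]
    rw [h1]
    have h2 : ∀ b : Fin n, (∑ a : Fin n, C i a * Theta n k a b * star (C j b))
        = Theta n k (fi i) b * star (C j b) := by
      intro b
      rw [Finset.sum_eq_single (fi i)]
      · rw [hCeq, if_pos rfl, one_mul]
      · intro a _ ha
        rw [hCeq, if_neg ha, zero_mul, zero_mul]
      · intro h; exact absurd (Finset.mem_univ _) h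
    rw [Finset.sum_congr rfl fun b _ => h2 b]
    rw [Finset.sum_eq_single (fi j)]
    · rw [hCeq, if_pos rfl]
      simp [Theta, hfi]
    · intro b _ hb
      rw [hCeq, if_neg hb]
      simp
    · intro h; exact absurd (Finset.mem_univ _) h
  have hmem : ∀ (k : ℕ) (i j : Fin m),
      (i, j) ∈ Jk k ↔ (σ j : ℤ) - (σ i : ℤ) = (k : ℤ) := by
    intro k i j
    rw [hJk, key]
    split <;> simp_all
  -- (a)
  have parta : ∀ k : ℕ, k < n → k ∉ Jplus → C * Theta n k * Cᴴ = 0 := by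
    intro k _ hk
    ext i j
    rw [key, Matrix.zero_apply, if_neg]
    intro h
    exact hk ((hJplus k).2 ⟨σ i, hσI i, σ j, hσI j, by omega, by omega⟩)
  -- (b)
  have partb : ∀ k ∈ Jplus, ∀ l ∈ Jplus, k ≠ l → Disjoint (Jk k) (Jk l) := by
    intro k _ l _ hkl
    rw [Finset.disjoint_left]
    intro q hq hq'
    have h1 := (hmem k q.1 q.2).1 hq
    have h2 := (hmem l q.1 q.2).1 hq'
    exact hkl (by omega)
  -- (c)
  have partc : ∀ i j : Fin m, i ≠ j →
      ((∃ k ∈ Jplus, (i, j) ∈ Jk k) ↔ ¬ ∃ k ∈ Jplus, (j, i) ∈ Jk k) := by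
    intro i j hij
    have hσij : σ i ≠ σ j := fun h => hij (hinj h)
    rcases lt_or_gt_of_ne hσij with h | h
    · have hL : ∃ k ∈ Jplus, (i, j) ∈ Jk k := by
        refine ⟨σ j - σ i, (hJplus _).2 ⟨σ i, hσI i, σ j, hσI j, by omega, rfl⟩,
          (hmem _ i j).2 (by omega)⟩
      have hR : ¬ ∃ k ∈ Jplus, (j, i) ∈ Jk k := by
        rintro ⟨k, _, hk'⟩
        have := (hmem k j i).1 hk'
        omega
      exact iff_of_true hL hR
    · have hL : ∃ k ∈ Jplus, (j, i) ∈ Jk k := by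
        refine ⟨σ i - σ j, (hJplus _).2 ⟨σ j, hσI j, σ i, hσI i, by omega, rfl⟩,
          (hmem _ j i).2 (by omega)⟩
      have hR : ¬ ∃ k ∈ Jplus, (i, j) ∈ Jk k := by
        rintro ⟨k, _, hk'⟩
        have := (hmem k i j).1 hk'
        omega
      exact iff_of_false hR (not_not_intro hL)
  -- (d)
  have partd : ∀ i : Fin m, ∃ k ∈ Jplus, (i, i) ∈ Jk k := by
    intro i
    exact ⟨0, (hJplus 0).2 ⟨σ i, hσI i, σ i, hσI i, le_refl _, by omega⟩,
      (hmem 0 i i).2 (by omega)⟩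
  refine ⟨parta, partb, partc, partd, ?_⟩
  -- (e)
  intro S _
  funext t
  set H := Cᴴ * S * C with hH
  -- entries of H vanish off the image of fi
  have hzero : ∀ a b : Fin n, ((∀ i : Fin m, a ≠ fi i) ∨ (∀ j : Fin m, b ≠ fi j)) →
      H a b = 0 := by
    intro a b hab
    rw [hH, Matrix.mul_apply]
    apply Finset.sum_eq_zero
    intro y _
    rw [Matrix.mul_apply]
    rcases hab with hab | hab
    · rw [Finset.sum_eq_zero, zero_mul]
      intro x _
      rw [conjTranspose_apply, hCeq, if_neg (hab x)]
      simp
    · rw [hCeq, if_neg (hab y), mul_zero]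
  have hEval : ∀ i j : Fin m, H (fi i) (fi j) = S i j := by
    intro i j
    rw [hH, Matrix.mul_apply, Finset.sum_eq_single j]
    · rw [hCeq, if_pos rfl, mul_one, Matrix.mul_apply, Finset.sum_eq_single i]
      · rw [conjTranspose_apply, hCeq, if_pos rfl]
        simp
      · intro x _ hx
        rw [conjTranspose_apply, hCeq, if_neg (fun h => hx (by
          apply hinj
          have := congrArg (fun z : Fin n => (z : ℕ)) h
          simpa [hfi] using this.symm)), star_zero, zero_mul]
      · intro h; exact absurd (Finset.mem_univ _) h
    · intro y _ hy
      rw [hCeq, if_neg (fun h => hy (by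
        apply hinj
        have := congrArg (fun z : Fin n => (z : ℕ)) h
        simpa [hfi] using this.symm)), mul_zero]
    · intro h; exact absurd (Finset.mem_univ _) h
  -- rewrite Tadj as a sum over pairs
  have hT : Tadj H t = ∑ p : Fin n × Fin n,
      (if (p.2 : ℤ) - (p.1 : ℤ) = (t : ℤ) then H p.1 p.2 else 0) := by
    rw [Tadj, Fintype.sum_prod_type]
  -- restrict to the image of φ
  set φ : Fin m × Fin m → Fin n × Fin n := fun q => (fi q.1, fi q.2) with hφ
  have hφinj : ∀ x ∈ (Finset.univ : Finset (Fin m × Fin m)), ∀ y ∈ Finset.univ,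
      φ x = φ y → x = y := by
    intro x _ y _ hxy
    have h1 : fi x.1 = fi y.1 := congrArg Prod.fst hxy
    have h2 : fi x.2 = fi y.2 := congrArg Prod.snd hxy
    have e1 : σ x.1 = σ y.1 := by simpa [hfi, Fin.ext_iff] using h1
    have e2 : σ x.2 = σ y.2 := by simpa [hfi, Fin.ext_iff] using h2
    exact Prod.ext (hinj e1) (hinj e2)
  have hsub : Finset.univ.image φ ⊆ (Finset.univ : Finset (Fin n × Fin n)) :=
    Finset.subset_univ _
  have hT2 : Tadj H t = ∑ q : Fin m × Fin m,
      (if (σ q.2 : ℤ) - (σ q.1 : ℤ) = (t : ℤ) then S q.1 q.2 else 0) := by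
    rw [hT, ← Finset.sum_subset hsub]
    · rw [Finset.sum_image hφinj]
      refine Finset.sum_congr rfl fun q _ => ?_
      have : H (φ q).1 (φ q).2 = S q.1 q.2 := hEval q.1 q.2
      simp only [hφ]
      rw [hEval q.1 q.2]
    · intro p _ hp
      have hz : H p.1 p.2 = 0 := by
        apply hzero
        by_contra hcon
        push_neg at hcon
        obtain ⟨⟨i, hi⟩, ⟨j, hj⟩⟩ := hcon
        exact hp (Finset.mem_image.2 ⟨(i, j), Finset.mem_univ _, by
          simp [hφ, ← hi, ← hj]⟩)
      rw [hz, ite_self]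
  -- compute the RHS at t
  have hRHS : (∑ k ∈ Jplus, (∑ q ∈ Jk k, S q.1 q.2) • ek n k) t
      = if (t : ℕ) ∈ Jplus then (∑ q ∈ Jk (t : ℕ), S q.1 q.2) else 0 := by
    rw [Finset.sum_apply]
    have : ∀ k ∈ Jplus, ((∑ q ∈ Jk k, S q.1 q.2) • ek n k) t
        = if (t : ℕ) = k then (∑ q ∈ Jk k, S q.1 q.2) else 0 := by
      intro k _
      simp [ek, mul_ite]
    rw [Finset.sum_congr rfl this, Finset.sum_ite_eq]
  rw [hT2, hRHS]
  have hJkfilter : Jk (t : ℕ) = Finset.univ.filter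
      (fun q : Fin m × Fin m => (σ q.2 : ℤ) - (σ q.1 : ℤ) = ((t : ℕ) : ℤ)) := by
    ext q
    obtain ⟨i, j⟩ := q
    simp [hmem]
  by_cases ht : (t : ℕ) ∈ Jplus
  · rw [if_pos ht, hJkfilter, Finset.sum_filter]
  · rw [if_neg ht]
    apply Finset.sum_eq_zero
    intro q _
    rw [if_neg]
    intro h
    exact ht ((hJplus _).2 ⟨σ q.1, hσI q.1, σ q.2, hσI q.2, by omega, by omega⟩)
end
end

section
/- Let 𝔸 = {A_j = (f_j, γ_j, n_j)}_{j=1}^p be a finite family of sampling grids with n_j ≥ 2 for every j. Then 𝒞(𝔸) is nonempty if and only if there exist a real number f_+ > 0, a real number γ_+, positive integers l_1,…,l_p and integers a_1,…,a_p such that f_+ = l_j f_j and γ_+ = l_j γ_j − a_j for every j ∈ {1,…,p}. -/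
set_option autoImplicit false

noncomputable section

/-- The sample-time set `T(A) = {(k − γ)/f : k = 0,…,n−1}` of a sampling grid
`A = (f, γ, n)`. -/
def sampleTimes (f γ : ℝ) (n : ℕ) : Set ℝ :=
  {t | ∃ k : ℕ, k < n ∧ t = ((k : ℝ) - γ) / f}

/-- for a finite family of sampling grids `A_j = (f_j, γ_j, n_j)` with
`n_j ≥ 2`, the set `𝒞(𝔸)` of common supporting grids is nonempty iff there exist
`f_+ > 0`, `γ_+ ∈ ℝ`, positive integers `l_j` and integers `a_j` with `f_+ = l_j f_j`
and `γ_+ = l_j γ_j − a_j` for every `j`. -/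
theorem stmt12 {ι : Type} [Fintype ι]
    (f γ : ι → ℝ) (nn : ι → ℕ)
    (hf : ∀ j, 0 < f j) (hn : ∀ j, 2 ≤ nn j) :
    (∃ (fp γp : ℝ) (np : ℕ), 0 < fp ∧ 0 < np ∧
        ∀ j, sampleTimes (f j) (γ j) (nn j) ⊆ sampleTimes fp γp np) ↔
      (∃ (fp γp : ℝ) (l : ι → ℕ) (a : ι → ℤ), 0 < fp ∧
        ∀ j, 0 < l j ∧ fp = (l j : ℝ) * f j ∧ γp = (l j : ℝ) * γ j - (a j : ℝ)) := by
  constructor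
  · rintro ⟨fp, γp, np, hfp, hnp, hsub⟩
    have key : ∀ j, ∃ (lj : ℕ) (aj : ℤ), 0 < lj ∧ fp = (lj : ℝ) * f j ∧
        γp = (lj : ℝ) * γ j - (aj : ℝ) := by
      intro j
      have hfj := hf j
      have h0 : ((0 : ℝ) - γ j) / f j ∈ sampleTimes fp γp np :=
        hsub j ⟨0, by have := hn j; omega, by norm_num⟩
      have h1 : ((1 : ℝ) - γ j) / f j ∈ sampleTimes fp γp np :=
        hsub j ⟨1, by have := hn j; omega, by norm_num⟩
      obtain ⟨k0, hk0, e0⟩ := h0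
      obtain ⟨k1, hk1, e1⟩ := h1
      rw [div_eq_div_iff hfj.ne' hfp.ne'] at e0 e1
      have hfp_eq : fp = ((k1 : ℝ) - (k0 : ℝ)) * f j := by linear_combination e1 - e0
      have hlt : (k0 : ℝ) < (k1 : ℝ) := by nlinarith
      have hltn : k0 < k1 := by exact_mod_cast hlt
      refine ⟨k1 - k0, -(k0 : ℤ), by omega, ?_, ?_⟩
      · rw [Nat.cast_sub hltn.le]; exact hfp_eq
      · rw [Nat.cast_sub hltn.le]
        push_cast
        field_simp at e0
        have key2 : γp * f j = (((k1 : ℝ) - k0) * γ j + k0) * f j := by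
          linear_combination e0 + γ j * hfp_eq
        have := mul_right_cancel₀ hfj.ne' key2
        linarith
    choose l a h1 h2 h3 using key
    exact ⟨fp, γp, l, a, hfp, fun j => ⟨h1 j, h2 j, h3 j⟩⟩
  · rintro ⟨fp, γp, l, a, hfp, h⟩
    set m : ℕ := Finset.univ.sup (fun j => (a j).natAbs) with hm
    set N : ℕ := Finset.univ.sup (fun j => l j * nn j) with hN
    refine ⟨fp, γp + (m : ℝ), N + 2 * m + 1, hfp, by omega, ?_⟩
    intro j t ht
    obtain ⟨k, hk, rfl⟩ := ht
    obtain ⟨hl, hfe, hγe⟩ := h j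
    have ha : (a j).natAbs ≤ m := by
      rw [hm]; exact Finset.le_sup (f := fun j => (a j).natAbs) (Finset.mem_univ j)
    have hln : l j * nn j ≤ N := by
      rw [hN]; exact Finset.le_sup (f := fun j => l j * nn j) (Finset.mem_univ j)
    have ha' : ((a j).natAbs : ℤ) ≤ (m : ℤ) := by exact_mod_cast ha
    have hlk : (0 : ℤ) ≤ (l j : ℤ) * k := by positivity
    have hknat : (0 : ℤ) ≤ (l j : ℤ) * k - a j + m := by omega
    set K : ℤ := (l j : ℤ) * k - a j + m with hK
    refine ⟨K.toNat, ?_, ?_⟩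
    · have hbd : K < (N : ℤ) + 2 * m := by
        have h1 : (l j : ℤ) * k < (l j : ℤ) * nn j := by
          have hk' : (k : ℤ) < nn j := by exact_mod_cast hk
          have : (0 : ℤ) < l j := by exact_mod_cast hl
          nlinarith
        have h2 : (l j : ℤ) * nn j ≤ N := by exact_mod_cast hln
        omega
      omega
    · have hlr : (0 : ℝ) < (l j : ℝ) := by exact_mod_cast hl
      have hKr : ((K.toNat : ℕ) : ℝ) = (l j : ℝ) * k - (a j : ℝ) + m := by
        rw [show ((K.toNat : ℕ) : ℝ) = ((K.toNat : ℤ) : ℝ) by push_cast; ring,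
          Int.toNat_of_nonneg hknat, hK]
        push_cast
        ring
      rw [hKr, hfe, hγe]
      have hfj := (hf j).ne'
      field_simp
      ring
end
end

section
/- Let 𝔸 = {A_j = (f_j, γ_j, n_j)}_{j=1}^p be a finite family of sampling grids with p ≥ 1, suppose 𝒞(𝔸) is nonempty, and let A_◦ = (f_◦, γ_◦, n_◦) be a minimal common supporting grid of 𝔸 with equivalent observation set I. Then 0 ∈ I and n_◦ − 1 ∈ I; in particular, every selection matrix C_I ∈ {0,1}^{|I|×n_◦} for I is admissible. -/
set_option autoImplicit false

open Matrix

noncomputable section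

/-- The equivalent observation set of a common supporting grid `(f_◦, γ_◦, n_◦)`:
`I = {k ∈ {0,…,n_◦−1} : (k − γ_◦)/f_◦ ∈ ⋃_j T(A_j)}`. -/
def obsSet {ι : Type} (f γ : ι → ℝ) (nn : ι → ℕ) (f0 γ0 : ℝ) (n0 : ℕ) : Set ℕ :=
  {k | k < n0 ∧ ∃ j, (((k : ℝ) - γ0) / f0) ∈ sampleTimes (f j) (γ j) (nn j)}

/-- The first standard basis vector `e_0` of `ℂ^n`. -/
def e0 (n : ℕ) : Fin n → ℂ := fun k => if (k : ℕ) = 0 then 1 else 0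

/-- if `A_◦ = (f_◦, γ_◦, n_◦)` is a minimal common supporting grid of a
nonempty finite family of sampling grids, with equivalent observation set `I`, then
`0 ∈ I` and `n_◦ − 1 ∈ I`; in particular every selection matrix for `I` is admissible
(full rank `|I|` and `e_0 ∈ range(C_I^*)`). -/
theorem stmt14 {ι : Type} [Fintype ι] [Nonempty ι]
    (f γ : ι → ℝ) (nn : ι → ℕ)
    (hf : ∀ j, 0 < f j) (hn : ∀ j, 0 < nn j)
    (f0 γ0 : ℝ) (n0 : ℕ) (hf0 : 0 < f0) (hn0 : 0 < n0)
    (hsupp : ∀ j, sampleTimes (f j) (γ j) (nn j) ⊆ sampleTimes f0 γ0 n0)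
    (hmin : ∀ (fp γp : ℝ) (np : ℕ), 0 < fp → 0 < np →
        (∀ j, sampleTimes (f j) (γ j) (nn j) ⊆ sampleTimes fp γp np) → n0 ≤ np) :
    0 ∈ obsSet f γ nn f0 γ0 n0 ∧ (n0 - 1) ∈ obsSet f γ nn f0 γ0 n0 ∧
    ∀ (m : ℕ) (σ : Fin m → ℕ), Function.Injective σ →
      (∀ x : ℕ, x ∈ obsSet f γ nn f0 γ0 n0 ↔ ∃ i : Fin m, σ i = x) →
      ∀ C : Matrix (Fin m) (Fin n0) ℂ,
        (∀ (i : Fin m) (j : Fin n0), C i j = if (j : ℕ) = σ i then 1 else 0) →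
        C.rank = m ∧ ∃ u : Fin m → ℂ, Cᴴ.mulVec u = e0 n0 := by

  classical
  have hknat : ∀ k k' : ℕ, ((k:ℝ) - γ0) / f0 = ((k':ℝ) - γ0) / f0 → k = k' := by
    intro k k' h
    field_simp at h
    exact_mod_cast (sub_left_inj.mp h)
  -- 0 ∈ I
  have h0 : 0 ∈ obsSet f γ nn f0 γ0 n0 := by
    refine ⟨hn0, ?_⟩
    by_contra hc
    push_neg at hc
    -- every sample time has index ≥ 1
    have hsub : ∀ j, sampleTimes (f j) (γ j) (nn j) ⊆ sampleTimes f0 (γ0 - 1) (n0 - 1) := by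
      intro j t ht
      obtain ⟨k, hk, rfl⟩ := hsupp j ht
      have hk0 : k ≠ 0 := by
        rintro rfl
        exact hc j ht
      refine ⟨k - 1, by omega, ?_⟩
      have : ((k - 1 : ℕ) : ℝ) = (k : ℝ) - 1 := by
        have : 1 ≤ k := by omega
        push_cast [this]; ring
      rw [this]; ring_nf
    obtain ⟨j0⟩ := ‹Nonempty ι›
    have ht0 : (((0:ℕ):ℝ) - γ j0) / f j0 ∈ sampleTimes (f j0) (γ j0) (nn j0) :=
      ⟨0, hn j0, rfl⟩
    obtain ⟨k1, hk1, _⟩ := hsub j0 ht0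
    have hpos : 0 < n0 - 1 := by omega
    have := hmin f0 (γ0 - 1) (n0 - 1) hf0 hpos hsub
    omega
  -- n0 - 1 ∈ I
  have hlast : (n0 - 1) ∈ obsSet f γ nn f0 γ0 n0 := by
    refine ⟨by omega, ?_⟩
    by_contra hc
    push_neg at hc
    have hsub : ∀ j, sampleTimes (f j) (γ j) (nn j) ⊆ sampleTimes f0 γ0 (n0 - 1) := by
      intro j t ht
      obtain ⟨k, hk, rfl⟩ := hsupp j ht
      have hk0 : k ≠ n0 - 1 := by
        rintro rfl
        exact hc j ht
      exact ⟨k, by omega, rfl⟩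
    obtain ⟨j0⟩ := ‹Nonempty ι›
    have ht0 : (((0:ℕ):ℝ) - γ j0) / f j0 ∈ sampleTimes (f j0) (γ j0) (nn j0) :=
      ⟨0, hn j0, rfl⟩
    obtain ⟨k1, hk1, _⟩ := hsub j0 ht0
    have hpos : 0 < n0 - 1 := by omega
    have := hmin f0 γ0 (n0 - 1) hf0 hpos hsub
    omega
  refine ⟨h0, hlast, ?_⟩
  intro m σ hσinj hσ C hC
  have hσlt : ∀ i, σ i < n0 := fun i => ((hσ (σ i)).2 ⟨i, rfl⟩).1
  have hCC : C * Cᴴ = 1 := by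
    ext i i'
    rw [Matrix.mul_apply]
    simp only [Matrix.conjTranspose_apply, hC, apply_ite star, star_one, star_zero]
    rw [Finset.sum_eq_single (⟨σ i, hσlt i⟩ : Fin n0)]
    · by_cases h : i = i'
      · subst h; simp
      · have : σ i ≠ σ i' := fun he => h (hσinj he)
        simp [Matrix.one_apply, h, this]
    · intro b _ hb
      have : (b : ℕ) ≠ σ i := by
        intro he
        exact hb (Fin.ext he)
      simp [this]
    · intro h
      exact absurd (Finset.mem_univ _) h
  constructor
  · refine le_antisymm ?_ ?_
    · simpa using C.rank_le_card_height
    · calc (m : ℕ) = (1 : Matrix (Fin m) (Fin m) ℂ).rank := by simp [Matrix.rank_one]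
        _ = (C * Cᴴ).rank := by rw [hCC]
        _ ≤ C.rank := Matrix.rank_mul_le_left _ _
  · obtain ⟨i0, hi0⟩ := (hσ 0).1 h0
    refine ⟨fun i => if i = i0 then 1 else 0, ?_⟩
    ext j
    rw [Matrix.mulVec, dotProduct]
    simp only [Matrix.conjTranspose_apply, hC, apply_ite star, star_one, star_zero]
    rw [Finset.sum_eq_single i0]
    · simp [e0, hi0]
    · intro b _ hb
      simp [hb]
    · intro h
      exact absurd (Finset.mem_univ _) h
end
end
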